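/- arXiv:1707.09658 — 4 statements merged into one kernel-verified Lean document; each statement's English description precedes it below -/
import Mathlib

section
/- Let 1 < p < ∞ and let (f_n) be a sequence of nonnegative functions in L^p([0,1]) with sup_n ‖f_n‖_p < ∞. Then for every ε > 0 there exists r_0 > 0 such that for all r ≥ r_0, the set {n : r^p · μ(f_n > r) < ε^p} belongs to any fixed nonprincipal ultrafilter 𝒰 on ℕ; equivalently, lim_{r→∞} lim_{n,𝒰} ‖r·I(f_n > r)‖_p = 0. -/
/-!
If the claim failed for some `ε`, then for arbitrarily large `r` the set of `n` with
`r ^ p * μ (f n > r) ≥ ε ^ p` would lie in `U`. Pick such scales `r₀ < r₁ < ⋯` with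
`r_{j+1} ^ p ≥ 2 * r_j ^ p`; as `U` is closed under finite intersections, a single `f n` is bad at
the first `K` scales. Summing Chebyshev's inequality over these scales costs only a factor `2`,
because the scales below `|f n x|` have `p`-th powers summing to at most `2 * |f n x| ^ p`.
Hence `K * ε ^ p ≤ 2 * C ^ p`, which fails for large `K`.
-/

open MeasureTheory Filter Set

noncomputable section

/-- Lebesgue measure restricted to `[0,1]`. -/
def μ01 : Measure ℝ := volume.restrict (Set.Icc (0:ℝ) 1)

/-- The `L^p([0,1])` norm of a function, as a real number. -/
def lpNorm (p : ℝ) (f : ℝ → ℝ) : ℝ := (eLpNorm f (ENNReal.ofReal p) μ01).toReal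

open scoped ENNReal

theorem exists_seq_le_of_forall_exists_le {α : Type*} [LE α] [Nonempty α] {P : α → Prop}
    (h : ∀ R, ∃ r, R ≤ r ∧ P r) (φ : α → α) : ∃ r : ℕ → α, ∀ j, P (r j) ∧ φ (r j) ≤ r (j + 1) := by
  choose g hg using h
  let s : ℕ → α := fun j => Nat.rec (Classical.arbitrary α) (fun _ t => φ (g t)) j
  exact ⟨fun j => g (s j), fun j => ⟨(hg (s j)).2, (hg (s (j + 1))).1⟩⟩

theorem Real.two_mul_rpow_le_rpow {p r r' : ℝ} (hp : 0 < p) (hr : 0 ≤ r) (h : 2 ^ p⁻¹ * r ≤ r') :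
    2 * r ^ p ≤ r' ^ p :=
  calc 2 * r ^ p = (2 ^ p⁻¹ * r) ^ p := by
        rw [Real.mul_rpow (by positivity) hr, ← Real.rpow_mul zero_le_two, inv_mul_cancel₀ hp.ne',
          Real.rpow_one]
    _ ≤ r' ^ p := Real.rpow_le_rpow (by positivity) h hp.le

theorem ENNReal.sum_ite_lt_le_min_of_two_mul_le {a : ℕ → ℝ≥0∞} (ha : ∀ j, 2 * a j ≤ a (j + 1))
    (y : ℝ≥0∞) (K : ℕ) :
    ∑ j ∈ Finset.range K, (if a j < y then a j else 0) ≤ min (a K) (2 * y) := by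
  induction K with
  | zero => simp
  | succ K ih =>
    rw [Finset.sum_range_succ]
    split_ifs with h
    · have hK : ∑ j ∈ Finset.range K, (if a j < y then a j else 0) ≤ a K :=
        ih.trans (min_le_left _ _)
      refine le_min ?_ ?_
      · calc _ ≤ a K + a K := add_le_add_left hK _
          _ ≤ a (K + 1) := (two_mul (a K)).symm ▸ ha K
      · calc _ ≤ y + y := add_le_add (hK.trans h.le) h.le
          _ = 2 * y := (two_mul y).symm
    · rw [add_zero]
      exact ih.trans (min_le_min_right _ (le_mul_of_one_le_left' one_le_two |>.trans (ha K)))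

theorem card_mul_le_two_mul_lintegral {α : Type*} [MeasurableSpace α] {μ : Measure α}
    {g : α → ℝ≥0∞} (hg : AEMeasurable g μ) {a : ℕ → ℝ≥0∞} (ha : ∀ j, 2 * a j ≤ a (j + 1))
    {δ : ℝ≥0∞} {K : ℕ} (hδ : ∀ j < K, δ ≤ a j * μ {x | a j < g x}) :
    K * δ ≤ 2 * ∫⁻ x, g x ∂μ := by
  have hS : ∀ j, NullMeasurableSet {x | a j < g x} μ := fun j =>
    nullMeasurableSet_lt aemeasurable_const hg
  calc (K : ℝ≥0∞) * δ = ∑ j ∈ Finset.range K, δ := by simp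
    _ ≤ ∑ j ∈ Finset.range K, a j * μ {x | a j < g x} :=
      Finset.sum_le_sum fun j hj => hδ j (Finset.mem_range.1 hj)
    _ = ∑ j ∈ Finset.range K, ∫⁻ x, {x | a j < g x}.indicator (fun _ => a j) x ∂μ := by
      refine Finset.sum_congr rfl fun j _ => ?_
      rw [lintegral_indicator_const₀ (hS j)]
    _ = ∫⁻ x, ∑ j ∈ Finset.range K, {x | a j < g x}.indicator (fun _ => a j) x ∂μ :=
      (lintegral_finsetSum' _ fun j _ => aemeasurable_const.indicator₀ (hS j)).symm
    _ ≤ ∫⁻ x, 2 * g x ∂μ := lintegral_mono fun x => by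
      simp only [indicator_apply, mem_ofPred_eq]
      exact (ENNReal.sum_ite_lt_le_min_of_two_mul_le ha (g x) K).trans (min_le_right _ _)
    _ = 2 * ∫⁻ x, g x ∂μ := lintegral_const_mul' _ _ ENNReal.ofNat_ne_top

theorem ofReal_le_mul_measure_of_le_mul_toReal {α : Type*} [MeasurableSpace α] {μ : Measure α}
    {f : α → ℝ} {p r η : ℝ} (hp : 0 < p) (hr : 0 ≤ r) (h : η ≤ r ^ p * (μ {x | r < f x}).toReal) :
    ENNReal.ofReal η ≤ ENNReal.ofReal (r ^ p) * μ {x | ENNReal.ofReal (r ^ p) < ‖f x‖ₑ ^ p} := by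
  have hsub : {x | r < f x} ⊆ {x | ENNReal.ofReal (r ^ p) < ‖f x‖ₑ ^ p} :=
    fun x (hx : r < f x) => by
      rw [mem_ofPred_eq, Real.enorm_eq_ofReal_abs,
        ENNReal.ofReal_rpow_of_nonneg (abs_nonneg _) hp.le,
        ENNReal.ofReal_lt_ofReal_iff_of_nonneg (by positivity)]
      exact Real.rpow_lt_rpow hr (hx.trans_le (le_abs_self _)) hp
  calc ENNReal.ofReal η ≤ ENNReal.ofReal (r ^ p * (μ {x | r < f x}).toReal) :=
        ENNReal.ofReal_le_ofReal h
    _ = ENNReal.ofReal (r ^ p) * ENNReal.ofReal (μ {x | r < f x}).toReal :=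
      ENNReal.ofReal_mul (by positivity)
    _ ≤ _ := by gcongr; exact ENNReal.ofReal_toReal_le.trans (measure_mono hsub)

theorem lintegral_enorm_rpow_le_of_lpNorm_le {p C : ℝ} {f : ℝ → ℝ} (hp : 0 < p)
    (hf : MemLp f (ENNReal.ofReal p) μ01) (hC : _root_.lpNorm p f ≤ C) :
    ∫⁻ x, ‖f x‖ₑ ^ p ∂μ01 ≤ ENNReal.ofReal (C ^ p) := by
  have hC0 : 0 ≤ C := ENNReal.toReal_nonneg.trans hC
  have hnorm : eLpNorm' f p μ01 ≤ ENNReal.ofReal C := by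
    rw [← ENNReal.toReal_ofReal hp.le, ← eLpNorm_eq_eLpNorm' (by simpa) ENNReal.ofReal_ne_top,
      ← ENNReal.ofReal_toReal hf.eLpNorm_ne_top]
    exact ENNReal.ofReal_le_ofReal hC
  rw [lintegral_rpow_enorm_eq_rpow_eLpNorm' hp, ← ENNReal.ofReal_rpow_of_nonneg hC0 hp.le]
  gcongr

theorem stmt0_general (p : ℝ) (hp : 1 < p) (U : Ultrafilter ℕ)
    (f : ℕ → ℝ → ℝ)
    (hmem : ∀ n, MemLp (f n) (ENNReal.ofReal p) μ01)
    (C : ℝ) (hC : ∀ n, lpNorm p (f n) ≤ C) :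
    ∀ ε > (0:ℝ), ∃ r0 > (0:ℝ), ∀ r ≥ r0,
      {n : ℕ | r ^ p * (μ01 {x | r < f n x}).toReal < ε ^ p} ∈ U := by
  have hp0 : 0 < p := by linarith
  have hC0 : 0 ≤ C := ENNReal.toReal_nonneg.trans (hC 0)
  intro ε hε
  by_contra! hbad
  have hfreq : ∀ R, ∃ r, R ≤ r ∧ 0 ≤ r ∧
      {n | ε ^ p ≤ r ^ p * (μ01 {x | r < f n x}).toReal} ∈ U := by
    intro R
    obtain ⟨r, hr, hnotin⟩ := hbad (max R 1) (by positivity)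
    refine ⟨r, (le_max_left _ _).trans hr, (zero_le_one.trans (le_max_right _ _)).trans hr, ?_⟩
    simpa only [compl_ofPred, not_lt] using Ultrafilter.compl_mem_iff_notMem.2 hnotin
  obtain ⟨r, hr⟩ := exists_seq_le_of_forall_exists_le hfreq (fun t => 2 ^ p⁻¹ * t)
  obtain ⟨K, hK⟩ := exists_nat_gt (2 * C ^ p / ε ^ p)
  obtain ⟨n, hn⟩ :=
    ((Filter.eventually_all_finset (Finset.range K)).2 fun j _ => (hr j).1.2).exists
  have hscales : ∀ j, 2 * ENNReal.ofReal (r j ^ p) ≤ ENNReal.ofReal (r (j + 1) ^ p) :=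
    fun j => by
      rw [← ENNReal.ofReal_ofNat, ← ENNReal.ofReal_mul zero_le_two]
      exact ENNReal.ofReal_le_ofReal (Real.two_mul_rpow_le_rpow hp0 (hr j).1.1 (hr j).2)
  have hmass : (K : ℝ≥0∞) * ENNReal.ofReal (ε ^ p) ≤ 2 * ENNReal.ofReal (C ^ p) :=
    calc (K : ℝ≥0∞) * ENNReal.ofReal (ε ^ p) ≤ 2 * ∫⁻ x, ‖f n x‖ₑ ^ p ∂μ01 :=
          card_mul_le_two_mul_lintegral ((hmem n).1.enorm.pow_const p) hscales fun j hj =>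
            ofReal_le_mul_measure_of_le_mul_toReal hp0 (hr j).1.1 (hn j (Finset.mem_range.2 hj))
      _ ≤ 2 * ENNReal.ofReal (C ^ p) := by
          gcongr; exact lintegral_enorm_rpow_le_of_lpNorm_le hp0 (hmem n) (hC n)
  rw [← ENNReal.ofReal_natCast, ← ENNReal.ofReal_ofNat, ← ENNReal.ofReal_mul (by positivity),
    ← ENNReal.ofReal_mul zero_le_two, ENNReal.ofReal_le_ofReal_iff (by positivity)] at hmass
  rw [div_lt_iff₀ (by positivity)] at hK
  linarith

/-- For nonnegative functions `f n` in `L^p` with uniformly bounded norms,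
`lim_{r→∞} lim_{n,𝒰} ‖r · I(f_n > r)‖_p = 0`, expressed via sets in the ultrafilter. -/
theorem stmt0 (p : ℝ) (hp : 1 < p) (U : Ultrafilter ℕ)
    (hU : (U : Filter ℕ) ≤ Filter.cofinite)
    (f : ℕ → ℝ → ℝ) (hnn : ∀ n x, 0 ≤ f n x)
    (hmem : ∀ n, MemLp (f n) (ENNReal.ofReal p) μ01)
    (C : ℝ) (hC : ∀ n, lpNorm p (f n) ≤ C) :
    ∀ ε > (0:ℝ), ∃ r0 > (0:ℝ), ∀ r ≥ r0,
      {n : ℕ | r ^ p * (μ01 {x | r < f n x}).toReal < ε ^ p} ∈ U :=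
  stmt0_general p hp U f hmem C hC

end
end

section
/- Let X be a Banach space with bounded projections P_1, P_2, P_3 satisfying P_iP_j = 0 for i ≠ j and P_1 + P_2 + P_3 = I, with ranges M_1, M_2, M_3 all nonzero. Let 𝒜 be the algebra of operators S ∈ B(X) such that SM_1 ⊆ M_1, S(M_2) ⊆ M_2, and S(M_2 ⊕ M_3) ⊆ M_2 ⊕ M_3 (block upper-triangular form [[*,0,0],[0,*,*],[0,0,*]]). Then the only closed subspaces of X invariant under every operator in 𝒜, other than 0 and X, are M_1, M_2, M_1 ⊕ M_2, and M_2 ⊕ M_3. -/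
/-!
A subspace `N` invariant under the algebra contains, together with any vector `v` with
`Pⱼ v ≠ 0`, the whole range of every `Pᵢ` for which the block `(i, j)` of the algebra is free:
the rank-one operators `Pᵢ ∘ (f ⊗ y) ∘ Pⱼ` with `f (Pⱼ v) = 1` lie in the algebra and send `v`
to `Pᵢ y`. So for each `j` either `N ⊆ ker Pⱼ` or `N` contains `Mⱼ` (and `M₂` too when `j = 3`),
and `x = P₁ x + P₂ x + P₃ x` leaves exactly the four listed subspaces.
-/

section RankOne

variable {𝕜 E F G : Type*} [Field 𝕜] [TopologicalSpace 𝕜] [IsTopologicalRing 𝕜]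
  [AddCommGroup E] [Module 𝕜 E] [TopologicalSpace E]
  [AddCommGroup F] [Module 𝕜 F] [TopologicalSpace F] [SeparatingDual 𝕜 F]
  [AddCommGroup G] [Module 𝕜 G] [TopologicalSpace G] [ContinuousSMul 𝕜 G]

theorem le_ker_or_range_le_of_forall_comp_mem (A : G →L[𝕜] E) (B : E →L[𝕜] F)
    {N : Submodule 𝕜 E} (hN : ∀ T : F →L[𝕜] G, ∀ v ∈ N, A (T (B v)) ∈ N) :
    N ≤ LinearMap.ker (B : E →ₗ[𝕜] F) ∨ LinearMap.range (A : G →ₗ[𝕜] E) ≤ N := by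
  refine or_iff_not_imp_left.mpr fun hN_ker => ?_
  obtain ⟨v, hvN, hBv⟩ := SetLike.not_le_iff_exists.mp hN_ker
  obtain ⟨f, hf⟩ : ∃ f : StrongDual 𝕜 F, f (B v) = 1 :=
    SeparatingDual.exists_eq_one (LinearMap.mem_ker.not.mp hBv)
  rintro _ ⟨y, rfl⟩
  simpa [hf] using hN (f.smulRight y) v hvN

end RankOne

theorem comp_mem_of_range_le_or_le_ker {R E F G : Type*} [Semiring R]
    [AddCommMonoid E] [Module R E] [AddCommMonoid F] [Module R F] [AddCommMonoid G] [Module R G]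
    {A : G →ₗ[R] E} {B : E →ₗ[R] F} {M : Submodule R E}
    (h : LinearMap.range A ≤ M ∨ M ≤ LinearMap.ker B) (T : F →ₗ[R] G) :
    ∀ v ∈ M, A (T (B v)) ∈ M := by
  intro v hv
  rcases h with hA | hB
  · exact hA (LinearMap.mem_range_self A _)
  · simp [LinearMap.mem_ker.mp (hB hv)]

theorem le_ker_or_range_le_of_invariant {𝕜 E : Type*} [Field 𝕜] [TopologicalSpace 𝕜]
    [IsTopologicalRing 𝕜] [AddCommGroup E] [Module 𝕜 E] [TopologicalSpace E]
    [SeparatingDual 𝕜 E] [ContinuousSMul 𝕜 E] {L : Set (Submodule 𝕜 E)} {N : Submodule 𝕜 E}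
    (hN : ∀ S : E →L[𝕜] E, (∀ M ∈ L, ∀ v ∈ M, S v ∈ M) → ∀ v ∈ N, S v ∈ N)
    (A B : E →L[𝕜] E)
    (hAB : ∀ M ∈ L,
      LinearMap.range (A : E →ₗ[𝕜] E) ≤ M ∨ M ≤ LinearMap.ker (B : E →ₗ[𝕜] E)) :
    N ≤ LinearMap.ker (B : E →ₗ[𝕜] E) ∨ LinearMap.range (A : E →ₗ[𝕜] E) ≤ N :=
  le_ker_or_range_le_of_forall_comp_mem A B fun T =>
    hN (A ∘L T ∘L B) fun M hM => comp_mem_of_range_le_or_le_ker (hAB M hM) T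

section ThreeProjections

variable {R X : Type*} [Semiring R] [AddCommMonoid X] [Module R X] {P₁ P₂ P₃ : X →ₗ[R] X}
  {N K : Submodule R X}

theorem le_of_le_ker_or_range_le (hsum : ∀ x, P₁ x + P₂ x + P₃ x = x)
    (h₁ : N ≤ LinearMap.ker P₁ ∨ LinearMap.range P₁ ≤ K)
    (h₂ : N ≤ LinearMap.ker P₂ ∨ LinearMap.range P₂ ≤ K)
    (h₃ : N ≤ LinearMap.ker P₃ ∨ LinearMap.range P₃ ≤ K) : N ≤ K := by
  have component_mem : ∀ {P : X →ₗ[R] X}, (N ≤ LinearMap.ker P ∨ LinearMap.range P ≤ K) →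
      ∀ x ∈ N, P x ∈ K := by
    rintro P (hP | hP) x hx
    · simp [LinearMap.mem_ker.mp (hP hx)]
    · exact hP (LinearMap.mem_range_self P x)
  intro x hx
  rw [← hsum x]
  exact add_mem (add_mem (component_mem h₁ x hx) (component_mem h₂ x hx)) (component_mem h₃ x hx)

theorem eq_range_or_eq_sup_range_of_le_ker_or_range_le (hsum : ∀ x, P₁ x + P₂ x + P₃ x = x)
    (h₁ : N ≤ LinearMap.ker P₁ ∨ LinearMap.range P₁ ≤ N)
    (h₂ : N ≤ LinearMap.ker P₂ ∨ LinearMap.range P₂ ≤ N)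
    (h₃ : N ≤ LinearMap.ker P₃ ∨ LinearMap.range P₂ ⊔ LinearMap.range P₃ ≤ N)
    (hbot : N ≠ ⊥) (htop : N ≠ ⊤) :
    N = LinearMap.range P₁ ∨ N = LinearMap.range P₂ ∨
      N = LinearMap.range P₁ ⊔ LinearMap.range P₂ ∨
      N = LinearMap.range P₂ ⊔ LinearMap.range P₃ := by
  rcases h₃ with k₃ | r₃
  · rcases h₁ with k₁ | r₁ <;> rcases h₂ with k₂ | r₂
    · exact absurd (le_bot_iff.mp (le_of_le_ker_or_range_le hsum (.inl k₁) (.inl k₂) (.inl k₃)))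
        hbot
    · exact .inr <| .inl <|
        (le_of_le_ker_or_range_le hsum (.inl k₁) (.inr le_rfl) (.inl k₃)).antisymm r₂
    · exact .inl <| (le_of_le_ker_or_range_le hsum (.inr le_rfl) (.inl k₂) (.inl k₃)).antisymm r₁
    · exact .inr <| .inr <| .inl <| (le_of_le_ker_or_range_le hsum (.inr le_sup_left)
        (.inr le_sup_right) (.inl k₃)).antisymm (sup_le r₁ r₂)
  · rcases h₁ with k₁ | r₁
    · exact .inr <| .inr <| .inr <| (le_of_le_ker_or_range_le hsum (.inl k₁) (.inr le_sup_left)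
        (.inr le_sup_right)).antisymm r₃
    · exact absurd (top_le_iff.mp (le_of_le_ker_or_range_le hsum (.inr r₁)
        (.inr (le_sup_left.trans r₃)) (.inr (le_sup_right.trans r₃)))) htop

end ThreeProjections

theorem stmt10_general (X : Type*) [NormedAddCommGroup X] [NormedSpace ℝ X]
    (P₁ P₂ P₃ : X →L[ℝ] X)
    (h12 : P₁ ∘L P₂ = 0) (h21 : P₂ ∘L P₁ = 0) (h13 : P₁ ∘L P₃ = 0)
    (h31 : P₃ ∘L P₁ = 0) (h32 : P₃ ∘L P₂ = 0)
    (hsum : P₁ + P₂ + P₃ = 1)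
    (M₁ M₂ M₃ : Submodule ℝ X)
    (hM₁ : M₁ = LinearMap.range (P₁ : X →ₗ[ℝ] X))
    (hM₂ : M₂ = LinearMap.range (P₂ : X →ₗ[ℝ] X))
    (hM₃ : M₃ = LinearMap.range (P₃ : X →ₗ[ℝ] X))
    (N : Submodule ℝ X)
    (hNinv : ∀ S : X →L[ℝ] X,
      (∀ v ∈ M₁, S v ∈ M₁) → (∀ v ∈ M₂, S v ∈ M₂) →
      (∀ v ∈ M₂ ⊔ M₃, S v ∈ M₂ ⊔ M₃) →
      ∀ v ∈ N, S v ∈ N)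
    (hNbot : N ≠ ⊥) (hNtop : N ≠ ⊤) :
    N = M₁ ∨ N = M₂ ∨ N = M₁ ⊔ M₂ ∨ N = M₂ ⊔ M₃ := by
  subst hM₁ hM₂ hM₃
  have range_le_ker {P Q : X →L[ℝ] X} (h : P ∘L Q = 0) :
      LinearMap.range (Q : X →ₗ[ℝ] X) ≤ LinearMap.ker (P : X →ₗ[ℝ] X) :=
    LinearMap.range_le_ker_iff.mpr (congrArg ContinuousLinearMap.toLinearMap h)
  have dichotomy := le_ker_or_range_le_of_invariant
    (L := {LinearMap.range (P₁ : X →ₗ[ℝ] X), LinearMap.range (P₂ : X →ₗ[ℝ] X),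
      LinearMap.range (P₂ : X →ₗ[ℝ] X) ⊔ LinearMap.range (P₃ : X →ₗ[ℝ] X)})
    (fun S hS => hNinv S (hS _ (by simp)) (hS _ (by simp)) (hS _ (by simp)))
  simp only [Set.mem_insert_iff, Set.mem_singleton_iff, forall_eq_or_imp, forall_eq]
    at dichotomy
  have d₁ := dichotomy P₁ P₁ ⟨.inl le_rfl, .inr (range_le_ker h12),
    .inr (sup_le (range_le_ker h12) (range_le_ker h13))⟩
  have d₂ := dichotomy P₂ P₂ ⟨.inr (range_le_ker h21), .inl le_rfl, .inl le_sup_left⟩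
  have d₂₃ := dichotomy P₂ P₃ ⟨.inr (range_le_ker h31), .inr (range_le_ker h32), .inl le_sup_left⟩
  have d₃₃ := dichotomy P₃ P₃ ⟨.inr (range_le_ker h31), .inr (range_le_ker h32), .inl le_sup_right⟩
  have d₃ : N ≤ LinearMap.ker (P₃ : X →ₗ[ℝ] X) ∨
      LinearMap.range (P₂ : X →ₗ[ℝ] X) ⊔ LinearMap.range (P₃ : X →ₗ[ℝ] X) ≤ N :=
    d₂₃.elim .inl fun r₂ => d₃₃.imp_right (sup_le r₂)
  exact eq_range_or_eq_sup_range_of_le_ker_or_range_le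
    (fun x => by simpa using DFunLike.congr_fun hsum x) d₁ d₂ d₃ hNbot hNtop

/-- if `X = M₁ ⊕ M₂ ⊕ M₃` via projections `P₁, P₂, P₃` and `𝒜` is the algebra
of block upper-triangular operators `[[*,0,0],[0,*,*],[0,0,*]]`, then the only nontrivial
closed subspaces of `X` invariant under every operator in `𝒜` are `M₁`, `M₂`, `M₁ ⊕ M₂`
and `M₂ ⊕ M₃`. -/
theorem stmt10 (X : Type*) [NormedAddCommGroup X] [NormedSpace ℝ X] [CompleteSpace X]
    (P₁ P₂ P₃ : X →L[ℝ] X)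
    (h11 : P₁ ∘L P₁ = P₁) (h22 : P₂ ∘L P₂ = P₂) (h33 : P₃ ∘L P₃ = P₃)
    (h12 : P₁ ∘L P₂ = 0) (h21 : P₂ ∘L P₁ = 0) (h13 : P₁ ∘L P₃ = 0)
    (h31 : P₃ ∘L P₁ = 0) (h23 : P₂ ∘L P₃ = 0) (h32 : P₃ ∘L P₂ = 0)
    (hsum : P₁ + P₂ + P₃ = 1)
    (M₁ M₂ M₃ : Submodule ℝ X)
    (hM₁ : M₁ = LinearMap.range (P₁ : X →ₗ[ℝ] X))
    (hM₂ : M₂ = LinearMap.range (P₂ : X →ₗ[ℝ] X))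
    (hM₃ : M₃ = LinearMap.range (P₃ : X →ₗ[ℝ] X))
    (hne₁ : M₁ ≠ ⊥) (hne₂ : M₂ ≠ ⊥) (hne₃ : M₃ ≠ ⊥)
    (N : Submodule ℝ X) (hNclosed : IsClosed (N : Set X))
    (hNinv : ∀ S : X →L[ℝ] X,
      (∀ v ∈ M₁, S v ∈ M₁) → (∀ v ∈ M₂, S v ∈ M₂) →
      (∀ v ∈ M₂ ⊔ M₃, S v ∈ M₂ ⊔ M₃) →
      ∀ v ∈ N, S v ∈ N)
    (hNbot : N ≠ ⊥) (hNtop : N ≠ ⊤) :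
    N = M₁ ∨ N = M₂ ∨ N = M₁ ⊔ M₂ ∨ N = M₂ ⊔ M₃ :=
  stmt10_general X P₁ P₂ P₃ h12 h21 h13 h31 h32 hsum M₁ M₂ M₃ hM₁ hM₂ hM₃ N hNinv hNbot hNtop
end

section
/- Let X be a Banach space decomposed as X = M_1 ⊕ M_2 ⊕ M_3 via projections P_1, P_2, P_3 as above, and let 𝒜 be the algebra of operators of block form [[*,0,0],[0,*,*],[0,0,*]]. Then the commutant of 𝒜 in B(X) equals the linear span of P_1 and I − P_1. -/
open Filter

/-- with `X = M₁ ⊕ M₂ ⊕ M₃` and `𝒜` the algebra of block operators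
`[[*,0,0],[0,*,*],[0,0,*]]`, the commutant of `𝒜` in `B(X)` is the span of `P₁` and
`I − P₁`. -/
theorem stmt11 (X : Type*) [NormedAddCommGroup X] [NormedSpace ℝ X] [CompleteSpace X]
    (P₁ P₂ P₃ : X →L[ℝ] X)
    (h11 : P₁ ∘L P₁ = P₁) (h22 : P₂ ∘L P₂ = P₂) (h33 : P₃ ∘L P₃ = P₃)
    (h12 : P₁ ∘L P₂ = 0) (h21 : P₂ ∘L P₁ = 0) (h13 : P₁ ∘L P₃ = 0)
    (h31 : P₃ ∘L P₁ = 0) (h23 : P₂ ∘L P₃ = 0) (h32 : P₃ ∘L P₂ = 0)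
    (hsum : P₁ + P₂ + P₃ = 1)
    (hne₁ : LinearMap.range (P₁ : X →ₗ[ℝ] X) ≠ ⊥)
    (hne₂ : LinearMap.range (P₂ : X →ₗ[ℝ] X) ≠ ⊥)
    (hne₃ : LinearMap.range (P₃ : X →ₗ[ℝ] X) ≠ ⊥)
    (T : X →L[ℝ] X) :
    (∀ S : X →L[ℝ] X,
      P₂ ∘L S ∘L P₁ = 0 → P₃ ∘L S ∘L P₁ = 0 → P₁ ∘L S ∘L P₂ = 0 →
      P₃ ∘L S ∘L P₂ = 0 → P₁ ∘L S ∘L P₃ = 0 →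
      T ∘L S = S ∘L T) ↔
    ∃ a b : ℝ, T = a • P₁ + b • (1 - P₁) := by
  -- pointwise versions of the hypotheses
  have p11 : ∀ x, P₁ (P₁ x) = P₁ x := fun x => by
    simpa using DFunLike.congr_fun h11 x
  have p22 : ∀ x, P₂ (P₂ x) = P₂ x := fun x => by
    simpa using DFunLike.congr_fun h22 x
  have p33 : ∀ x, P₃ (P₃ x) = P₃ x := fun x => by
    simpa using DFunLike.congr_fun h33 x
  have p12 : ∀ x, P₁ (P₂ x) = 0 := fun x => by
    simpa using DFunLike.congr_fun h12 x
  have p21 : ∀ x, P₂ (P₁ x) = 0 := fun x => by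
    simpa using DFunLike.congr_fun h21 x
  have p13 : ∀ x, P₁ (P₃ x) = 0 := fun x => by
    simpa using DFunLike.congr_fun h13 x
  have p31 : ∀ x, P₃ (P₁ x) = 0 := fun x => by
    simpa using DFunLike.congr_fun h31 x
  have p32 : ∀ x, P₃ (P₂ x) = 0 := fun x => by
    simpa using DFunLike.congr_fun h32 x
  have psum : ∀ x : X, P₁ x + P₂ x + P₃ x = x := fun x => by
    simpa using DFunLike.congr_fun hsum x
  constructor
  · intro H
    -- pick nonzero vectors in the ranges together with normalizing functionals
    obtain ⟨u, ⟨xu, hxu⟩, hu0⟩ := Submodule.exists_mem_ne_zero_of_ne_bot hne₁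
    obtain ⟨w₂, ⟨x2, hx2⟩, hw20⟩ := Submodule.exists_mem_ne_zero_of_ne_bot hne₂
    obtain ⟨w₃, ⟨x3, hx3⟩, hw30⟩ := Submodule.exists_mem_ne_zero_of_ne_bot hne₃
    have hu1 : P₁ u = u := by rw [← hxu]; exact p11 xu
    have hw2 : P₂ w₂ = w₂ := by rw [← hx2]; exact p22 x2
    have hw3 : P₃ w₃ = w₃ := by rw [← hx3]; exact p33 x3
    obtain ⟨f, hf⟩ := SeparatingDual.exists_eq_one (R := ℝ) hu0
    obtain ⟨g₂, hg2⟩ := SeparatingDual.exists_eq_one (R := ℝ) hw20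
    obtain ⟨g₃, hg3⟩ := SeparatingDual.exists_eq_one (R := ℝ) hw30
    -- rank one operators P₁ A P₁ are in the algebra
    have key1 : ∀ v : X, T (P₁ v) = f (P₁ (T u)) • P₁ v := by
      intro v
      set S : X →L[ℝ] X := (f ∘L P₁).smulRight (P₁ v) with hS
      have c1 : P₂ ∘L S ∘L P₁ = 0 := by
        ext x; simp [hS, p11, p21]
      have c2 : P₃ ∘L S ∘L P₁ = 0 := by
        ext x; simp [hS, p11, p31]
      have c3 : P₁ ∘L S ∘L P₂ = 0 := by
        ext x; simp [hS, p12]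
      have c4 : P₃ ∘L S ∘L P₂ = 0 := by
        ext x; simp [hS, p12]
      have c5 : P₁ ∘L S ∘L P₃ = 0 := by
        ext x; simp [hS, p13]
      have hc := DFunLike.congr_fun (H S c1 c2 c3 c4 c5) u
      simp only [ContinuousLinearMap.comp_apply, hS,
        ContinuousLinearMap.smulRight_apply, ContinuousLinearMap.coe_comp',
        Function.comp_apply, hu1, hf, one_smul, map_smul] at hc
      simpa using hc
    have key2 : ∀ v : X, T (P₂ v) = g₂ (P₂ (T w₂)) • P₂ v := by
      intro v
      set S : X →L[ℝ] X := (g₂ ∘L P₂).smulRight (P₂ v) with hS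
      have c1 : P₂ ∘L S ∘L P₁ = 0 := by
        ext x; simp [hS, p21]
      have c2 : P₃ ∘L S ∘L P₁ = 0 := by
        ext x; simp [hS, p21]
      have c3 : P₁ ∘L S ∘L P₂ = 0 := by
        ext x; simp [hS, p12]
      have c4 : P₃ ∘L S ∘L P₂ = 0 := by
        ext x; simp [hS, p22, p32]
      have c5 : P₁ ∘L S ∘L P₃ = 0 := by
        ext x; simp [hS, p12]
      have hc := DFunLike.congr_fun (H S c1 c2 c3 c4 c5) w₂
      simp only [ContinuousLinearMap.comp_apply, hS,
        ContinuousLinearMap.smulRight_apply, ContinuousLinearMap.coe_comp',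
        Function.comp_apply, hw2, hg2, one_smul, map_smul] at hc
      simpa using hc
    have key3 : ∀ v : X, T (P₃ v) = g₃ (P₃ (T w₃)) • P₃ v := by
      intro v
      set S : X →L[ℝ] X := (g₃ ∘L P₃).smulRight (P₃ v) with hS
      have c1 : P₂ ∘L S ∘L P₁ = 0 := by
        ext x; simp [hS, p31]
      have c2 : P₃ ∘L S ∘L P₁ = 0 := by
        ext x; simp [hS, p31]
      have c3 : P₁ ∘L S ∘L P₂ = 0 := by
        ext x; simp [hS, p32]
      have c4 : P₃ ∘L S ∘L P₂ = 0 := by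
        ext x; simp [hS, p32]
      have c5 : P₁ ∘L S ∘L P₃ = 0 := by
        ext x; simp [hS, p13]
      have hc := DFunLike.congr_fun (H S c1 c2 c3 c4 c5) w₃
      simp only [ContinuousLinearMap.comp_apply, hS,
        ContinuousLinearMap.smulRight_apply, ContinuousLinearMap.coe_comp',
        Function.comp_apply, hw3, hg3, one_smul, map_smul] at hc
      simpa using hc
    set a : ℝ := f (P₁ (T u)) with ha
    set b₂ : ℝ := g₂ (P₂ (T w₂)) with hb2
    set b₃ : ℝ := g₃ (P₃ (T w₃)) with hb3
    -- the off-diagonal rank-one operator P₂ A P₃ forces b₂ = b₃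
    have hbb : b₂ = b₃ := by
      set S : X →L[ℝ] X := (g₃ ∘L P₃).smulRight (P₂ w₂) with hS
      have c1 : P₂ ∘L S ∘L P₁ = 0 := by
        ext x; simp [hS, p31]
      have c2 : P₃ ∘L S ∘L P₁ = 0 := by
        ext x; simp [hS, p31]
      have c3 : P₁ ∘L S ∘L P₂ = 0 := by
        ext x; simp [hS, p32]
      have c4 : P₃ ∘L S ∘L P₂ = 0 := by
        ext x; simp [hS, p32]
      have c5 : P₁ ∘L S ∘L P₃ = 0 := by
        ext x; simp [hS, p12]
      have hc := DFunLike.congr_fun (H S c1 c2 c3 c4 c5) w₃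
      have hTw3 : T w₃ = b₃ • w₃ := by
        have h := key3 w₃; rwa [hw3] at h
      have hL : T (S w₃) = b₂ • w₂ := by
        have hSw3 : S w₃ = P₂ w₂ := by
          simp [hS, hw3, hg3]
        rw [hSw3, key2 w₂, hw2]
      have hR : S (T w₃) = b₃ • w₂ := by
        simp [hS, hTw3, hw3, hg3, hw2]
      simp only [ContinuousLinearMap.comp_apply] at hc
      rw [hL, hR] at hc
      have hz : (b₂ - b₃) • w₂ = 0 := by rw [sub_smul, hc, sub_self]
      rcases smul_eq_zero.mp hz with h | h
      · linarith [sub_eq_zero.mp (by exact h)]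
      · exact absurd h hw20
    refine ⟨a, b₂, ?_⟩
    ext x
    have h23x : P₂ x + P₃ x = x - P₁ x := by
      rw [eq_sub_iff_add_eq]
      conv_rhs => rw [← psum x]
      abel
    calc T x = T (P₁ x) + T (P₂ x) + T (P₃ x) := by
          conv_lhs => rw [← psum x]
          rw [map_add, map_add]
      _ = a • P₁ x + b₂ • P₂ x + b₂ • P₃ x := by
          rw [key1 x, key2 x, key3 x, hbb]
      _ = (a • P₁ + b₂ • (1 - P₁)) x := by
          simp only [ContinuousLinearMap.add_apply, ContinuousLinearMap.smul_apply,
            ContinuousLinearMap.sub_apply, ContinuousLinearMap.one_apply]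
          rw [← h23x, smul_add]; abel
  · rintro ⟨a, b, rfl⟩ S hS1 hS2 hS3 hS4 hS5
    have q1 : ∀ x, P₂ (S (P₁ x)) = 0 := fun x => by
      simpa using DFunLike.congr_fun hS1 x
    have q2 : ∀ x, P₃ (S (P₁ x)) = 0 := fun x => by
      simpa using DFunLike.congr_fun hS2 x
    have q3 : ∀ x, P₁ (S (P₂ x)) = 0 := fun x => by
      simpa using DFunLike.congr_fun hS3 x
    have q5 : ∀ x, P₁ (S (P₃ x)) = 0 := fun x => by
      simpa using DFunLike.congr_fun hS5 x
    have hkeyx : ∀ x, P₁ (S x) = S (P₁ x) := by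
      intro x
      have e1 : P₁ (S x) = P₁ (S (P₁ x)) := by
        conv_lhs => rw [← psum x]
        rw [map_add, map_add, map_add, map_add, q3 x, q5 x, add_zero, add_zero]
      have e2 : S (P₁ x) = P₁ (S (P₁ x)) := by
        conv_lhs => rw [← psum (S (P₁ x))]
        rw [q1 x, q2 x, add_zero, add_zero]
      rw [e1, e2]; exact p11 _
    ext x
    simp only [ContinuousLinearMap.comp_apply, ContinuousLinearMap.add_apply,
      ContinuousLinearMap.smul_apply, ContinuousLinearMap.sub_apply,
      ContinuousLinearMap.one_apply, map_add, map_smul, map_sub, hkeyx x]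
end

section
/- Let p > 2 and 𝒰 a nonprincipal ultrafilter on ℕ. Define M = {(f_n)_{n,𝒰} ∈ (L^p)^𝒰 : lim_{n,𝒰} ‖f_n‖_2 = 0} and let R be the projection R[(f_n)_{n,𝒰}] = lim_{r→∞}(f_n I(|f_n|>r))_{n,𝒰}. Then R[(f_n)_{n,𝒰}] ∈ M for every (f_n)_{n,𝒰} ∈ (L^p)^𝒰, and R[(f_n)_{n,𝒰}] = (f_n)_{n,𝒰} for every (f_n)_{n,𝒰} ∈ M; i.e., M = ran R. -/
/-! Split `f = f·1{|f| ≤ r} + f·1{|f| > r}`. For `p > 2`, pointwise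
`|t|² ≤ r^(2-p) |t|^p` on `{|t| > r}` and `|t|^p ≤ r^(p-2) |t|²` on `{|t| ≤ r}`, so the tail is
uniformly small in `L²` over an `L^p`-bounded family, while the body is controlled in `L^p` by the
`L²` norm. As `g` is the `L^p`-limit of the tails, `‖g‖₂ ≤ ‖tail‖₂ + ‖tail - g‖_p` is small; if
moreover `‖fₙ‖₂ → 0`, then `‖fₙ - gₙ‖_p ≤ ‖body‖_p + ‖tail - gₙ‖_p` is small. -/

open MeasureTheory Filter Set

noncomputable section

/-- `g` represents `R[(f_n)_{n,𝒰}] = lim_{r→∞}(f_n I(|f_n|>r))_{n,𝒰}`. -/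
def RImage (U : Ultrafilter ℕ) (p : ℝ) (f g : ℕ → ℝ → ℝ) : Prop :=
  ∀ ε > (0:ℝ), ∃ r0 : ℝ, ∀ r ≥ r0,
    {n : ℕ | lpNorm p (fun x => ({y : ℝ | r < |f n y|}.indicator (f n)) x - g n x) < ε} ∈ U

open scoped ENNReal Topology

instance : IsProbabilityMeasure μ01 :=
  ⟨by simp [μ01, Real.volume_Icc]⟩

lemma Real.rpow_two_le_rpow_mul_rpow_of_lt {p r x : ℝ} (hp : 2 ≤ p) (hr : 0 < r) (hx : r < x) :
    x ^ (2:ℝ) ≤ r ^ (2 - p) * x ^ p := by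
  have hx0 : 0 ≤ x := hr.le.trans hx.le
  calc x ^ (2:ℝ) = x ^ (2 - p) * x ^ p := by
        rw [← Real.rpow_add' hx0 (by rw [sub_add_cancel]; norm_num), sub_add_cancel]
    _ ≤ r ^ (2 - p) * x ^ p := by
      gcongr ?_ * _
      exact Real.rpow_le_rpow_of_nonpos hr hx.le (by linarith)

lemma Real.rpow_le_rpow_mul_rpow_two_of_le {p r x : ℝ} (hp : 2 ≤ p) (hx0 : 0 ≤ x) (hx : x ≤ r) :
    x ^ p ≤ r ^ (p - 2) * x ^ (2:ℝ) := by
  calc x ^ p = x ^ (p - 2) * x ^ (2:ℝ) := by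
        rw [← Real.rpow_add' hx0 (by linarith), sub_add_cancel]
    _ ≤ r ^ (p - 2) * x ^ (2:ℝ) := by gcongr

lemma Real.enorm_rpow {q : ℝ} (hq : 0 ≤ q) (x : ℝ) : ‖x‖ₑ ^ q = ENNReal.ofReal (|x| ^ q) := by
  rw [Real.enorm_eq_ofReal_abs, ENNReal.ofReal_rpow_of_nonneg (abs_nonneg x) hq]

lemma Filter.tendsto_zero_of_le_add {ι : Type*} {l : Filter ι} {a : ι → ℝ} {e d : ℝ → ι → ℝ}
    (ha : ∀ i, 0 ≤ a i) (hle : ∀ r i, a i ≤ e r i + d r i)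
    (he : ∀ ε > 0, ∀ r₀, ∃ r ≥ r₀, ∀ᶠ i in l, e r i < ε)
    (hd : ∀ ε > 0, ∃ r₀, ∀ r ≥ r₀, ∀ᶠ i in l, d r i < ε) :
    Tendsto a l (𝓝 0) := by
  refine tendsto_order.2 ⟨fun b hb => Eventually.of_forall fun i => hb.trans_le (ha i),
    fun ε hε => ?_⟩
  obtain ⟨r₀, hr₀⟩ := hd (ε / 2) (half_pos hε)
  obtain ⟨r, hr, her⟩ := he (ε / 2) (half_pos hε) r₀
  filter_upwards [her, hr₀ r hr] with i hei hdi
  linarith [hle r i]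

namespace MeasureTheory

variable {α : Type*} [MeasurableSpace α] {μ : Measure α}

lemma eLpNorm_ofReal_rpow_eq_lintegral {E : Type*} [NormedAddCommGroup E] {q : ℝ} (hq : 0 < q)
    (f : α → E) : eLpNorm f (ENNReal.ofReal q) μ ^ q = ∫⁻ x, ‖f x‖ₑ ^ q ∂μ := by
  have h := eLpNorm_nnreal_pow_eq_lintegral (f := f) (μ := μ) (p := q.toNNReal) (by simpa using hq)
  rwa [Real.coe_toNNReal _ hq.le] at h

lemma lpNorm_le_lpNorm_of_exponent_le {E : Type*} [NormedAddCommGroup E] [IsProbabilityMeasure μ]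
    {f : α → E} {q q' : ℝ≥0∞} (hqq' : q ≤ q') (hf : MemLp f q' μ) :
    lpNorm f q μ ≤ lpNorm f q' μ := by
  rw [← toReal_eLpNorm hf.1, ← toReal_eLpNorm hf.1]
  exact ENNReal.toReal_mono hf.2.ne (eLpNorm_le_eLpNorm_of_exponent_le hqq' hf.1)

section Truncation

variable {f : α → ℝ} {p r : ℝ}

lemma nullMeasurableSet_lt_abs (hf : AEStronglyMeasurable f μ) (r : ℝ) :
    NullMeasurableSet {y | r < |f y|} μ :=
  nullMeasurableSet_lt aemeasurable_const hf.aemeasurable.abs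

lemma MemLp.indicator_lt_abs {q : ℝ≥0∞} (hf : MemLp f q μ) (r : ℝ) :
    MemLp ({y | r < |f y|}.indicator f) q μ :=
  hf.of_le (hf.1.indicator₀ (nullMeasurableSet_lt_abs hf.1 r))
    (ae_of_all _ fun _ => norm_indicator_le_norm_self _ _)

lemma eLpNorm_indicator_lt_abs_sq_le (hp : 2 ≤ p) (hr : 0 < r) (f : α → ℝ) :
    eLpNorm ({y | r < |f y|}.indicator f) 2 μ ^ 2 ≤
      ENNReal.ofReal (r ^ (2 - p)) * eLpNorm f (ENNReal.ofReal p) μ ^ p := by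
  have h2 := eLpNorm_ofReal_rpow_eq_lintegral (μ := μ) two_pos ({y | r < |f y|}.indicator f)
  rw [ENNReal.ofReal_ofNat] at h2
  rw [← ENNReal.rpow_two, h2, eLpNorm_ofReal_rpow_eq_lintegral (by linarith),
    ← lintegral_const_mul' _ _ ENNReal.ofReal_ne_top]
  refine lintegral_mono fun x => ?_
  by_cases hx : r < |f x|
  · rw [indicator_of_mem (s := {y | r < |f y|}) hx, Real.enorm_rpow zero_le_two,
      Real.enorm_rpow (by linarith), ← ENNReal.ofReal_mul (by positivity)]
    exact ENNReal.ofReal_le_ofReal (Real.rpow_two_le_rpow_mul_rpow_of_lt hp hr hx)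
  · simp [indicator_of_notMem (s := {y | r < |f y|}) hx]

lemma eLpNorm_indicator_abs_le_rpow_le (hp : 2 ≤ p) (f : α → ℝ) :
    eLpNorm ({y | r < |f y|}ᶜ.indicator f) (ENNReal.ofReal p) μ ^ p ≤
      ENNReal.ofReal (r ^ (p - 2)) * eLpNorm f 2 μ ^ 2 := by
  have h2 := eLpNorm_ofReal_rpow_eq_lintegral (μ := μ) two_pos f
  rw [ENNReal.ofReal_ofNat] at h2
  rw [← ENNReal.rpow_two, h2, eLpNorm_ofReal_rpow_eq_lintegral (by linarith),
    ← lintegral_const_mul' _ _ ENNReal.ofReal_ne_top]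
  refine lintegral_mono fun x => ?_
  by_cases hx : r < |f x|
  · rw [indicator_of_notMem (s := {y | r < |f y|}ᶜ) (not_not_intro hx), enorm_zero,
      ENNReal.zero_rpow_of_pos (by linarith)]
    exact bot_le
  · have hxr : |f x| ≤ r := not_lt.1 hx
    rw [indicator_of_mem (s := {y | r < |f y|}ᶜ) hx, Real.enorm_rpow (by linarith),
      Real.enorm_rpow zero_le_two,
      ← ENNReal.ofReal_mul (Real.rpow_nonneg ((abs_nonneg _).trans hxr) _)]
    exact ENNReal.ofReal_le_ofReal (Real.rpow_le_rpow_mul_rpow_two_of_le hp (abs_nonneg _) hxr)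

lemma lpNorm_indicator_lt_abs_sq_le (hp : 2 ≤ p) (hr : 0 < r)
    (hf : MemLp f (ENNReal.ofReal p) μ) :
    lpNorm ({y | r < |f y|}.indicator f) 2 μ ^ 2 ≤
      r ^ (2 - p) * lpNorm f (ENNReal.ofReal p) μ ^ p := by
  have h := ENNReal.toReal_mono
    (ENNReal.mul_ne_top ENNReal.ofReal_ne_top (ENNReal.rpow_ne_top_of_nonneg (by linarith) hf.2.ne))
    (eLpNorm_indicator_lt_abs_sq_le (μ := μ) hp hr f)
  rwa [ENNReal.toReal_mul, ENNReal.toReal_ofReal (by positivity), ENNReal.toReal_pow,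
    ← ENNReal.toReal_rpow, toReal_eLpNorm (hf.indicator_lt_abs r).1, toReal_eLpNorm hf.1] at h

lemma lpNorm_indicator_abs_le_rpow_le (hp : 2 ≤ p) (hr : 0 ≤ r) (hf : MemLp f 2 μ) :
    lpNorm ({y | r < |f y|}ᶜ.indicator f) (ENNReal.ofReal p) μ ^ p ≤
      r ^ (p - 2) * lpNorm f 2 μ ^ 2 := by
  have h := ENNReal.toReal_mono
    (ENNReal.mul_ne_top ENNReal.ofReal_ne_top (ENNReal.pow_ne_top hf.2.ne))
    (eLpNorm_indicator_abs_le_rpow_le (μ := μ) (r := r) hp f)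
  rwa [ENNReal.toReal_mul, ENNReal.toReal_ofReal (by positivity), ENNReal.toReal_pow,
    ← ENNReal.toReal_rpow, toReal_eLpNorm hf.1,
    toReal_eLpNorm (hf.1.indicator₀ (nullMeasurableSet_lt_abs hf.1 r).compl)] at h

end Truncation

section TailLimit

variable {ι : Type*}

def IsTailLimit (l : Filter ι) (μ : Measure α) (q : ℝ≥0∞) (f g : ι → α → ℝ) : Prop :=
  ∀ ε > 0, ∃ r₀, ∀ r ≥ r₀, ∀ᶠ i in l, lpNorm ({y | r < |f i y|}.indicator (f i) - g i) q μ < ε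

variable {l : Filter ι} {f g : ι → α → ℝ} {p : ℝ}

theorem IsTailLimit.tendsto_lpNorm_two [IsProbabilityMeasure μ] {C : ℝ} (hp : 2 < p)
    (hf : ∀ i, MemLp (f i) (ENNReal.ofReal p) μ)
    (hfC : ∀ i, lpNorm (f i) (ENNReal.ofReal p) μ ≤ C)
    (hg : ∀ i, MemLp (g i) (ENNReal.ofReal p) μ) (hR : IsTailLimit l μ (ENNReal.ofReal p) f g) :
    Tendsto (fun i => lpNorm (g i) 2 μ) l (𝓝 0) := by
  have h2p : (2 : ℝ≥0∞) ≤ ENNReal.ofReal p := ENNReal.ofNat_le_ofReal.2 hp.le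
  refine tendsto_zero_of_le_add (e := fun r i => lpNorm ({y | r < |f i y|}.indicator (f i)) 2 μ)
    (fun _ => lpNorm_nonneg) (fun r i => ?_) (fun ε hε r₀ => ?_) hR
  · have htail := (hf i).indicator_lt_abs r
    calc lpNorm (g i) 2 μ
        ≤ lpNorm ({y | r < |f i y|}.indicator (f i)) 2 μ +
            lpNorm ({y | r < |f i y|}.indicator (f i) - g i) 2 μ :=
          lpNorm_le_lpNorm_add_lpNorm_sub (htail.mono_exponent h2p) one_le_two
      _ ≤ _ := by
          gcongr
          exact lpNorm_le_lpNorm_of_exponent_le h2p (htail.sub (hg i))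
  · have hlim : Tendsto (fun r : ℝ => r ^ (2 - p) * C ^ p) atTop (𝓝 0) := by
      simpa [neg_sub] using (tendsto_rpow_neg_atTop (by linarith : 0 < p - 2)).mul_const (C ^ p)
    obtain ⟨r, hrC, hr⟩ := ((hlim.eventually (gt_mem_nhds (pow_pos hε 2))).and
      (eventually_ge_atTop (max r₀ 1))).exists
    have hr0 : 0 < r := one_pos.trans_le (le_of_max_le_right hr)
    refine ⟨r, le_of_max_le_left hr,
      Eventually.of_forall fun i => lt_of_pow_lt_pow_left₀ 2 hε.le ?_⟩
    calc lpNorm ({y | r < |f i y|}.indicator (f i)) 2 μ ^ 2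
        ≤ r ^ (2 - p) * lpNorm (f i) (ENNReal.ofReal p) μ ^ p :=
          lpNorm_indicator_lt_abs_sq_le hp.le hr0 (hf i)
      _ ≤ r ^ (2 - p) * C ^ p := by gcongr; exacts [lpNorm_nonneg, hfC i]
      _ < ε ^ 2 := hrC

theorem IsTailLimit.tendsto_lpNorm_sub [IsFiniteMeasure μ] (hp : 2 ≤ p)
    (hf : ∀ i, MemLp (f i) (ENNReal.ofReal p) μ) (hg : ∀ i, MemLp (g i) (ENNReal.ofReal p) μ)
    (hR : IsTailLimit l μ (ENNReal.ofReal p) f g)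
    (hf2 : Tendsto (fun i => lpNorm (f i) 2 μ) l (𝓝 0)) :
    Tendsto (fun i => lpNorm (f i - g i) (ENNReal.ofReal p) μ) l (𝓝 0) := by
  have h2p : (2 : ℝ≥0∞) ≤ ENNReal.ofReal p := ENNReal.ofNat_le_ofReal.2 hp
  refine tendsto_zero_of_le_add
    (e := fun r i => lpNorm ({y | r < |f i y|}ᶜ.indicator (f i)) (ENNReal.ofReal p) μ)
    (fun _ => lpNorm_nonneg) (fun r i => ?_)
    (fun ε hε r₀ => ⟨max r₀ 1, le_max_left _ _, ?_⟩) hR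
  · calc lpNorm (f i - g i) (ENNReal.ofReal p) μ
        = lpNorm ({y | r < |f i y|}ᶜ.indicator (f i) +
            ({y | r < |f i y|}.indicator (f i) - g i)) (ENNReal.ofReal p) μ := by
          rw [← add_sub_assoc, indicator_compl_add_self]
      _ ≤ _ := lpNorm_add_le' (((hf i).indicator_lt_abs r).sub (hg i)) (one_le_two.trans h2p)
  · have hr : (0 : ℝ) < max r₀ 1 := one_pos.trans_le (le_max_right _ _)
    have hlim : Tendsto (fun i => max r₀ 1 ^ (p - 2) * lpNorm (f i) 2 μ ^ 2) l (𝓝 0) := by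
      simpa using (hf2.pow 2).const_mul (max r₀ 1 ^ (p - 2))
    filter_upwards [hlim.eventually (gt_mem_nhds (Real.rpow_pos_of_pos hε p))] with i hi
    refine (Real.rpow_lt_rpow_iff lpNorm_nonneg hε.le (by linarith : (0 : ℝ) < p)).1 ?_
    exact (lpNorm_indicator_abs_le_rpow_le hp hr.le ((hf i).mono_exponent h2p)).trans_lt hi

end TailLimit

end MeasureTheory

lemma RImage.isTailLimit {U : Ultrafilter ℕ} {p : ℝ} {f g : ℕ → ℝ → ℝ} (h : RImage U p f g)
    (hf : ∀ n, AEStronglyMeasurable (f n) μ01) (hg : ∀ n, AEStronglyMeasurable (g n) μ01) :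
    IsTailLimit (U : Filter ℕ) μ01 (ENNReal.ofReal p) f g := by
  intro ε hε
  obtain ⟨r₀, hr₀⟩ := h ε hε
  refine ⟨r₀, fun r hr => ?_⟩
  filter_upwards [hr₀ r hr] with n hn
  rw [← toReal_eLpNorm (((hf n).indicator₀ (nullMeasurableSet_lt_abs (hf n) r)).sub (hg n))]
  exact hn

theorem stmt12_general (p : ℝ) (hp : 2 < p) (U : Ultrafilter ℕ)
    (f g : ℕ → ℝ → ℝ)
    (hf : ∀ n, MemLp (f n) (ENNReal.ofReal p) μ01)
    (hfb : ∃ C : ℝ, ∀ n, lpNorm p (f n) ≤ C)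
    (hg : ∀ n, MemLp (g n) (ENNReal.ofReal p) μ01)
    (hRg : RImage U p f g) :
    -- `R[(f_n)] ∈ M`
    Tendsto (fun n => (eLpNorm (g n) 2 μ01).toReal) U (nhds 0) ∧
    -- if `(f_n)_{n,𝒰} ∈ M` then `R[(f_n)] = (f_n)`
    (Tendsto (fun n => (eLpNorm (f n) 2 μ01).toReal) U (nhds 0) →
      Tendsto (fun n => lpNorm p (fun x => f n x - g n x)) U (nhds 0)) := by
  obtain ⟨C, hC⟩ := hfb
  have hR := hRg.isTailLimit (fun n => (hf n).1) (fun n => (hg n).1)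
  refine ⟨?_, fun hf2 => ?_⟩
  · exact (hR.tendsto_lpNorm_two hp hf (fun n => (toReal_eLpNorm (hf n).1).symm.trans_le (hC n))
      hg).congr fun n => (toReal_eLpNorm (hg n).1).symm
  · refine (hR.tendsto_lpNorm_sub hp.le hf hg
      (hf2.congr fun n => toReal_eLpNorm (hf n).1)).congr fun n => ?_
    exact (toReal_eLpNorm ((hf n).1.sub (hg n).1)).symm

/-- for `p > 2` and `M = {(f_n)_{n,𝒰} : lim_{n,𝒰} ‖f_n‖₂ = 0}`, the projection
`R` maps `(L^p)^𝒰` into `M` and is the identity on `M`; that is, `M = ran R`. -/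
theorem stmt12 (p : ℝ) (hp : 2 < p) (U : Ultrafilter ℕ)
    (hU : (U : Filter ℕ) ≤ Filter.cofinite)
    (f g : ℕ → ℝ → ℝ)
    (hf : ∀ n, MemLp (f n) (ENNReal.ofReal p) μ01)
    (hfb : ∃ C : ℝ, ∀ n, lpNorm p (f n) ≤ C)
    (hg : ∀ n, MemLp (g n) (ENNReal.ofReal p) μ01)
    (hRg : RImage U p f g) :
    -- `R[(f_n)] ∈ M`
    Tendsto (fun n => (eLpNorm (g n) 2 μ01).toReal) U (nhds 0) ∧
    -- if `(f_n)_{n,𝒰} ∈ M` then `R[(f_n)] = (f_n)`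
    (Tendsto (fun n => (eLpNorm (f n) 2 μ01).toReal) U (nhds 0) →
      Tendsto (fun n => lpNorm p (fun x => f n x - g n x)) U (nhds 0)) :=
  stmt12_general p hp U f g hf hfb hg hRg
end
end
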